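/- Let v1 be a binary XOS valuation on [m] and let k be a positive integer. For a k-tuple (b_1,…,b_k) of arbitrary binary additive valuations (i.e., arbitrary subsets B_1,…,B_k ⊆ [m]), define the expected utility U(b_1,…,b_k) = ∑_{j=1}^k v1(B_j) − (k/2) ∑_{i=1}^m x_i², where x_i = (1/k) ∑_{j=1}^k 1[i ∈ B_j]. If (b_1,…,b_k) maximizes U over all k-tuples of binary additive valuations, then each b_j is a clause of v1 and (b_1,…,b_k) is a (k,1/2)-sketch of v1. (This shows that in the proposed mechanism, reporting a (k,1/2)-sketch is a dominant strategy for each bidder.) -/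

import Mathlib

open Finset

/-- Value of a binary XOS valuation with clause set `V` on a bundle `S`. -/
def xval {m : ℕ} (V : Finset (Finset (Fin m))) (S : Finset (Fin m)) : ℕ :=
  V.sup fun C => (C ∩ S).card

/-- `x_i`: the fraction of the `k` reported sets `b` containing item `i`. -/
noncomputable def sketchX {m k : ℕ} (b : Fin k → Finset (Fin m)) (i : Fin m) : ℝ :=
  (∑ j, if i ∈ b j then (1 : ℝ) else 0) / k

/-- The objective `∑ i (x_i − α x_i²)` that a `(k,α)`-sketch maximizes. -/
noncomputable def sketchObj {m k : ℕ} (α : ℝ) (b : Fin k → Finset (Fin m)) : ℝ :=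
  ∑ i, (sketchX b i - α * (sketchX b i) ^ 2)

/-- `(b_1,…,b_k)` is a `(k,α)`-sketch of the binary XOS valuation with clause set `V`. -/
def IsSketch {m k : ℕ} (α : ℝ) (V : Finset (Finset (Fin m)))
    (b : Fin k → Finset (Fin m)) : Prop :=
  (∀ j, b j ∈ V) ∧
    ∀ c : Fin k → Finset (Fin m), (∀ j, c j ∈ V) → sketchObj α c ≤ sketchObj α b

/-- A bidder's expected utility in the mechanism when reporting the `k`-tuple of sets `b`:
`∑_j v1(B_j) − (k/2) ∑_i x_i²`. -/
noncomputable def utility {m k : ℕ} (V1 : Finset (Finset (Fin m)))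
    (b : Fin k → Finset (Fin m)) : ℝ :=
  (∑ j, (xval V1 (b j) : ℝ)) - (k / 2 : ℝ) * ∑ i, (sketchX b i) ^ 2

/-!
Let `A j` be a clause of `v1` attaining `v1 (b j)` and `d j = A j ∩ b j`. Reporting `d`
instead of `b` keeps every value `v1 (b j)` and, unless `d = b`, strictly lowers `∑ x_i²`.
Reporting `A` instead of `d` strictly raises `∑ (x_i − x_i²/2)` unless `d = A`, because
`t ↦ t − t²/2` is increasing on `[0,1]`; on tuples of clauses the utility is `k` times this
sketch objective. Hence a maximizer satisfies `b = d = A`, and among tuples of clauses it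
maximizes the objective.
-/

lemma xval_of_mem {m : ℕ} {V : Finset (Finset (Fin m))} {A : Finset (Fin m)} (hA : A ∈ V) :
    xval V A = A.card :=
  le_antisymm (Finset.sup_le fun _ _ => card_le_card inter_subset_right)
    (calc A.card = (A ∩ A).card := by rw [inter_self]
      _ ≤ xval V A := le_sup (f := fun C => (C ∩ A).card) hA)

lemma strictMonoOn_sub_half_sq : StrictMonoOn (fun t : ℝ => t - 1 / 2 * t ^ 2) (Set.Icc 0 1) := by
  rintro s ⟨hs, -⟩ t ⟨-, ht⟩ hst
  nlinarith

section Sketch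

variable {m k : ℕ}

lemma sketchX_nonneg (s : Fin k → Finset (Fin m)) (i : Fin m) : 0 ≤ sketchX s i :=
  div_nonneg (sum_nonneg fun _ _ => by split_ifs <;> norm_num) k.cast_nonneg

lemma sketchX_le_one (s : Fin k → Finset (Fin m)) (i : Fin m) : sketchX s i ≤ 1 := by
  refine div_le_one_of_le₀ ?_ k.cast_nonneg
  calc ∑ j, (if i ∈ s j then (1 : ℝ) else 0) ≤ ∑ _j : Fin k, 1 :=
        sum_le_sum fun _ _ => by split_ifs <;> norm_num
    _ = k := by simp

lemma strictMono_sketchX : StrictMono (sketchX : (Fin k → Finset (Fin m)) → Fin m → ℝ) := by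
  intro s t hst
  have hk : (0 : ℝ) < k := by
    obtain ⟨j, -⟩ := (Pi.lt_def.1 hst).2
    exact_mod_cast j.pos
  have indicator_le : ∀ i j, (if i ∈ s j then (1 : ℝ) else 0) ≤ if i ∈ t j then 1 else 0 :=
    fun i j => by
      by_cases hs : i ∈ s j
      · simp [hs, hst.le j hs]
      · simp only [hs, if_false]; split_ifs <;> norm_num
  refine Pi.lt_def.2 ⟨fun i => div_le_div_of_nonneg_right
    (sum_le_sum fun j _ => indicator_le i j) hk.le, ?_⟩
  obtain ⟨j, hj⟩ := (Pi.lt_def.1 hst).2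
  obtain ⟨i, hit, his⟩ := exists_of_ssubset hj
  refine ⟨i, div_lt_div_of_pos_right (sum_lt_sum (fun j _ => indicator_le i j) ?_) hk⟩
  exact ⟨j, mem_univ j, by simp [hit, his]⟩

lemma strictMono_sketchObj_half :
    StrictMono (sketchObj (1 / 2) : (Fin k → Finset (Fin m)) → ℝ) := by
  intro s t hst
  have hx := Pi.lt_def.1 (strictMono_sketchX hst)
  have mem : ∀ (u : Fin k → Finset (Fin m)) i, sketchX u i ∈ Set.Icc (0 : ℝ) 1 :=
    fun u i => ⟨sketchX_nonneg u i, sketchX_le_one u i⟩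
  obtain ⟨i, hi⟩ := hx.2
  exact sum_lt_sum (fun i _ => strictMonoOn_sub_half_sq.monotoneOn (mem s i) (mem t i) (hx.1 i))
    ⟨i, mem_univ i, strictMonoOn_sub_half_sq (mem s i) (mem t i) hi⟩

lemma strictMono_sum_sq_sketchX :
    StrictMono fun s : Fin k → Finset (Fin m) => ∑ i, sketchX s i ^ 2 := by
  intro s t hst
  have hx := Pi.lt_def.1 (strictMono_sketchX hst)
  obtain ⟨i, hi⟩ := hx.2
  exact sum_lt_sum (fun i _ => pow_le_pow_left₀ (sketchX_nonneg s i) (hx.1 i) 2)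
    ⟨i, mem_univ i, pow_lt_pow_left₀ hi (sketchX_nonneg s i) two_ne_zero⟩

lemma sum_card_eq_mul_sum_sketchX (s : Fin k → Finset (Fin m)) :
    ∑ j, ((s j).card : ℝ) = k * ∑ i, sketchX s i := by
  rcases k.eq_zero_or_pos with rfl | hk
  · simp
  calc ∑ j, ((s j).card : ℝ) = ∑ j, ∑ i, (if i ∈ s j then (1 : ℝ) else 0) :=
        sum_congr rfl fun j _ => by simp [sum_ite_mem]
    _ = ∑ i, ∑ j, (if i ∈ s j then (1 : ℝ) else 0) := sum_comm
    _ = k * ∑ i, sketchX s i := by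
        rw [mul_sum]
        exact sum_congr rfl fun i _ => (mul_div_cancel₀ _ (by positivity)).symm

lemma mul_sketchObj_half (s : Fin k → Finset (Fin m)) :
    k * sketchObj (1 / 2) s = ∑ j, ((s j).card : ℝ) - k / 2 * ∑ i, sketchX s i ^ 2 := by
  rw [sum_card_eq_mul_sum_sketchX, sketchObj, sum_sub_distrib, ← mul_sum]
  ring

lemma utility_of_forall_mem {V1 : Finset (Finset (Fin m))} {s : Fin k → Finset (Fin m)}
    (hs : ∀ j, s j ∈ V1) : utility V1 s = k * sketchObj (1 / 2) s := by
  simp only [utility, xval_of_mem (hs _), mul_sketchObj_half]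

lemma eq_of_utility_le {V1 : Finset (Finset (Fin m))} (hk : 0 < k)
    {A b : Fin k → Finset (Fin m)} (hA : ∀ j, A j ∈ V1)
    (hAb : ∀ j, xval V1 (b j) = (A j ∩ b j).card) (hle : utility V1 A ≤ utility V1 b) :
    b = A := by
  set d := A ⊓ b
  have hkR : (0 : ℝ) < k := by exact_mod_cast hk
  have hb : utility V1 b = k * sketchObj (1 / 2) d
      - k / 2 * (∑ i, sketchX b i ^ 2 - ∑ i, sketchX d i ^ 2) := by
    rw [utility, mul_sketchObj_half]
    simp only [hAb, d, Pi.inf_apply, inf_eq_inter]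
    ring
  rw [utility_of_forall_mem hA, hb] at hle
  have hsq := strictMono_sum_sq_sketchX.monotone (inf_le_right : d ≤ b)
  have hobj := strictMono_sketchObj_half.monotone (inf_le_left : d ≤ A)
  have hdA : d = A := eq_of_le_of_not_lt inf_le_left fun h => by
    nlinarith [strictMono_sketchObj_half h]
  have hdb : d = b := eq_of_le_of_not_lt inf_le_right fun h => by
    nlinarith [strictMono_sum_sq_sketchX h]
  rw [← hdb, hdA]

end Sketch

/-- any `k`-tuple of binary additive reports maximizing the expected utility
in the mechanism consists of clauses of `v1` and is a `(k,1/2)`-sketch of `v1`. -/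
theorem stmt12 {m k : ℕ} (hk : 0 < k)
    (V1 : Finset (Finset (Fin m))) (hV1 : V1.Nonempty)
    (b : Fin k → Finset (Fin m))
    (hmax : ∀ c : Fin k → Finset (Fin m), utility V1 c ≤ utility V1 b) :
    (∀ j, b j ∈ V1) ∧ IsSketch (1 / 2 : ℝ) V1 b := by
  choose A hA hAb using fun j => exists_mem_eq_sup V1 hV1 fun C => (C ∩ b j).card
  obtain rfl : b = A := eq_of_utility_le hk hA hAb (hmax A)
  refine ⟨hA, hA, fun c hc => le_of_mul_le_mul_left ?_ (by exact_mod_cast hk : (0 : ℝ) < k)⟩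
  rw [← utility_of_forall_mem hc, ← utility_of_forall_mem hA]
  exact hmax c
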